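/- The reduction axiom for negation is valid in AA: [φ]¬ψ ↔ (φ → ¬[φ]ψ), and the reduction axiom for conjunction: [φ](ψ∧χ) ↔ ([φ]ψ ∧ [φ]χ). -/

import Mathlib

/-- Formulas of asynchronous announcement logic over agents `A` and atoms `P`.
`⊥` is included as a primitive for convenience (it is an abbreviation in the paper). -/
inductive Form (A P : Type) : Type where
  | bot  : Form A P
  | atom : P → Form A P
  | neg  : Form A P → Form A P
  | and  : Form A P → Form A P → Form A P
  | know : A → Form A P → Form A P
  | ann  : Form A P → Form A P → Form A P
  | next : A → Form A P → Form A P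

namespace Form

def size {A P : Type} : Form A P → ℕ
  | bot => 1
  | atom _ => 1
  | neg φ => φ.size + 1
  | and φ ψ => φ.size + ψ.size + 1
  | know _ φ => φ.size + 1
  | ann φ ψ => φ.size + ψ.size + 1
  | next _ φ => φ.size + 1

theorem size_pos {A P : Type} (φ : Form A P) : 1 ≤ φ.size := by
  cases φ <;> simp [size]

end Form

/-- An epistemic frame with valuation: equivalence relations `∼ₐ` and a valuation. -/
structure Frame (A P S : Type) where
  rel : A → S → S → Prop
  equiv : ∀ a, Equivalence (rel a)
  val : P → Set S

/-- `g ≤ₐ f` between cuts. -/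
def cutLE {A : Type} (a : A) (g f : A → ℕ) : Prop :=
  g a = f a ∧ ∀ b, b ≠ a → g b ≤ f a

/-- `f⁺ᵃ`: increment the cut `f` at agent `a`. -/
def inc {A : Type} [DecidableEq A] (a : A) (f : A → ℕ) : A → ℕ :=
  fun b => if b = a then f a + 1 else f b

def histSize {A P : Type} (σ : List (Form A P)) : ℕ := (σ.map Form.size).sum

mutual
/-- Truth in an asynchronous (pre-)model.  The announcement history `σ` is stored
with the most recent announcement first; `f` is the cut, `s` the state. -/
def Sat {A P S : Type} [DecidableEq A] (F : Frame A P S) : List (Form A P) → (A → ℕ) → S → Form A P → Prop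
  | _, _, _, .bot => False
  | _, _, s, .atom p => s ∈ F.val p
  | σ, f, s, .neg φ => ¬ Sat F σ f s φ
  | σ, f, s, .and φ ψ => Sat F σ f s φ ∧ Sat F σ f s ψ
  | σ, f, s, .know a φ =>
      ∀ t g, F.rel a s t → cutLE a g f → Good F σ g t → Sat F σ g t φ
  | σ, f, s, .ann ψ χ => Sat F σ f s ψ → Sat F (ψ :: σ) f s χ
  | σ, f, s, .next a φ => f a < σ.length → Sat F σ (inc a f) s φ
termination_by σ _ _ φ => histSize σ + φ.size
decreasing_by
  all_goals simp_all [histSize, Form.size]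
  all_goals first
    | omega
    | (have := Form.size_pos φ; omega)

/-- `(S,∼,V,s,σ,f)` is an asynchronous model (the history together with the cut
can be generated by truthful announcements and receptions). -/
def Good {A P S : Type} [DecidableEq A] (F : Frame A P S) : List (Form A P) → (A → ℕ) → S → Prop
  | [], f, _ => ∀ a, f a = 0
  | ψ :: σ, f, s =>
      (∀ a, f a ≤ σ.length + 1) ∧
      ∃ f', (∀ a, f' a ≤ f a) ∧ Good F σ f' s ∧ Sat F σ f' s ψ
termination_by σ _ _ => histSize σ + 1
decreasing_by
  all_goals simp_all [histSize, Form.size]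
  all_goals (have := Form.size_pos ψ; omega)
end


section Announcement

variable {A P S : Type} [DecidableEq A] (F : Frame A P S) (σ : List (Form A P)) (f : A → ℕ) (s : S)
  (φ ψ χ : Form A P)

theorem sat_ann_neg :
    Sat F σ f s (.ann φ (.neg ψ)) ↔ (Sat F σ f s φ → ¬ Sat F σ f s (.ann φ ψ)) := by
  simp only [Sat]
  tauto

theorem sat_ann_and :
    Sat F σ f s (.ann φ (.and ψ χ)) ↔ (Sat F σ f s (.ann φ ψ) ∧ Sat F σ f s (.ann φ χ)) := by
  simp only [Sat]
  tauto

end Announcement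

/-- The reduction axioms for negation and conjunction are valid in AA:
`[φ]¬ψ ↔ (φ → ¬[φ]ψ)` and `[φ](ψ∧χ) ↔ ([φ]ψ ∧ [φ]χ)`. -/
theorem red_neg_and {A P : Type} [DecidableEq A] [Fintype A] [Countable P]
    (φ ψ χ : Form A P) :
    ∀ (S : Type) (F : Frame A P S) (σ : List (Form A P)) (f : A → ℕ) (s : S),
      Good F σ f s →
      (Sat F σ f s (.ann φ (.neg ψ)) ↔
        (Sat F σ f s φ → ¬ Sat F σ f s (.ann φ ψ))) ∧
      (Sat F σ f s (.ann φ (.and ψ χ)) ↔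
        (Sat F σ f s (.ann φ ψ) ∧ Sat F σ f s (.ann φ χ))) :=
  fun _ F σ f s _ => ⟨sat_ann_neg F σ f s φ ψ, sat_ann_and F σ f s φ ψ χ⟩
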